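/- Let G be a connected twin-free bipartite graph on n ≥ 3 vertices that is not the path P4. Then γ^ID(G) ≤ 2n/3. -/

import Mathlib

open SimpleGraph

/-- The closed neighbourhood of a vertex. -/
def closedNbr {V : Type*} (G : SimpleGraph V) (v : V) : Set V := insert v (G.neighborSet v)

/-- `C` is an identifying code of `G`. -/
def IsIdCode {V : Type*} (G : SimpleGraph V) (C : Set V) : Prop :=
  (∀ v : V, (closedNbr G v ∩ C).Nonempty) ∧
  ∀ u v : V, closedNbr G u ∩ C = closedNbr G v ∩ C → u = v

/-- A vertex of degree 1. -/
def IsLeaf {V : Type*} (G : SimpleGraph V) (v : V) : Prop := (G.neighborSet v).ncard = 1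

/-- The set of leaves of `G`. -/
def leaves {V : Type*} (G : SimpleGraph V) : Set V := {v | IsLeaf G v}

/-- The set of support vertices of `G`. -/
def supports {V : Type*} (G : SimpleGraph V) : Set V := {v | ∃ u, IsLeaf G u ∧ G.Adj v u}

/-- `G` is identifiable: distinct vertices have distinct closed neighbourhoods. -/
def Identifiable {V : Type*} (G : SimpleGraph V) : Prop :=
  ∀ u v : V, closedNbr G u = closedNbr G v → u = v

/-- `G` is twin-free: no two distinct vertices share an open or closed neighbourhood. -/
def TwinFree {V : Type*} (G : SimpleGraph V) : Prop :=
  ∀ u v : V, u ≠ v →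
    G.neighborSet u ≠ G.neighborSet v ∧ closedNbr G u ≠ closedNbr G v

/-!
Let `S` be the set of support vertices and `L` the set of leaves, so that `|S| ≤ |L|`. For each
side `A` of the bipartition, `A` together with one non-leaf neighbour of every support vertex
in `A` is an identifying code of size at most `|A| + |S ∩ A|`: a vertex outside `A` is identified
by its open neighbourhood, and a vertex of `A` only fails to be separated from a leaf hanging
on it. The non-leaves form a third identifying code, of size `n - |L| ≤ n - |S|`, unless two
adjacent non-leaves each carry exactly one pendant leaf and nothing else, which in a connected
graph means `G = P₄`. The three codes have total size at most `2n`, so one of them has at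
most `2n/3` vertices.
-/

section Leaves

variable {V : Type*} {G : SimpleGraph V} {s u v w x : V}

lemma mem_closedNbr : x ∈ closedNbr G v ↔ x = v ∨ G.Adj v x := Iff.rfl

lemma self_mem_closedNbr (G : SimpleGraph V) (v : V) : v ∈ closedNbr G v :=
  Set.mem_insert v _

lemma mem_closedNbr_of_adj (h : G.Adj v x) : x ∈ closedNbr G v := Or.inr h

lemma isLeaf_of_neighborSet_eq (h : G.neighborSet v = {w}) : IsLeaf G v := by
  rw [IsLeaf, h, Set.ncard_singleton]

lemma IsLeaf.exists_adj (hv : IsLeaf G v) : ∃ w, G.Adj v w := by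
  obtain ⟨w, hw⟩ := Set.ncard_eq_one.mp hv
  exact ⟨w, by rw [← mem_neighborSet, hw]; rfl⟩

lemma IsLeaf.neighborSet_eq (hv : IsLeaf G v) (h : G.Adj v w) : G.neighborSet v = {w} := by
  obtain ⟨w', hw'⟩ := Set.ncard_eq_one.mp hv
  have hw : w ∈ G.neighborSet v := h
  rw [hw', Set.mem_singleton_iff] at hw
  rw [hw', hw]

lemma IsLeaf.eq_of_adj (hv : IsLeaf G v) (hw : G.Adj v w) (hx : G.Adj v x) : x = w := by
  have hx' : x ∈ G.neighborSet v := hx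
  rwa [hv.neighborSet_eq hw] at hx'

lemma TwinFree.eq_of_isLeaf_of_adj (htf : TwinFree G) (hv : IsLeaf G v) (hw : IsLeaf G w)
    (hsv : G.Adj s v) (hsw : G.Adj s w) : v = w := by
  by_contra hne
  exact (htf v w hne).1 (by rw [hv.neighborSet_eq hsv.symm, hw.neighborSet_eq hsw.symm])

lemma ncard_supports_le_ncard_leaves [Finite V] : (supports G).ncard ≤ (leaves G).ncard := by
  choose! l hl hpl using fun p (hp : p ∈ supports G) => hp
  refine Set.ncard_le_ncard_of_injOn l hl (fun p hp q hq h => ?_) (Set.toFinite _)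
  exact ((hl p hp).eq_of_adj (hpl p hp).symm (h ▸ (hpl q hq).symm)).symm

end Leaves

namespace SimpleGraph

variable {V : Type*} {G : SimpleGraph V} {u v x y : V}

lemma Preconnected.mem_of_adj_closed (h : G.Preconnected) {S : Set V}
    (hS : ∀ ⦃a b⦄, a ∈ S → G.Adj a b → b ∈ S) (hu : u ∈ S) (v : V) : v ∈ S := by
  by_contra hv
  obtain ⟨d, -, hd, hd'⟩ := (h u v).some.exists_boundary_dart S hu hv
  exact hd' (hS hd d.adj)

lemma Preconnected.nonempty_iso_pathGraph_four (h : G.Preconnected)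
    (hx : G.neighborSet x = {u}) (hu : G.neighborSet u = {x, v})
    (hv : G.neighborSet v = {u, y}) (hy : G.neighborSet y = {v}) (hxv : x ≠ v) :
    Nonempty (G ≃g pathGraph 4) := by
  simp only [Set.ext_iff, mem_neighborSet, Set.mem_insert_iff, Set.mem_singleton_iff] at hx hu hv hy
  have hxu : x ≠ u := G.ne_of_adj ((hx u).mpr rfl)
  have huv : u ≠ v := G.ne_of_adj ((hu v).mpr (Or.inr rfl))
  have hvy : v ≠ y := G.ne_of_adj ((hv y).mpr (Or.inr rfl))
  have hyu : y ≠ u := by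
    rintro rfl
    exact hxv ((hy x).mp ((hu x).mpr (Or.inl rfl)))
  have hxy : x ≠ y := by
    rintro rfl
    exact huv ((hx v).mp ((hy v).mpr rfl)).symm
  let g : Fin 4 → V := ![x, u, v, y]
  have hg_inj : Function.Injective g := by
    intro a b hab
    fin_cases a <;> fin_cases b <;> simp_all [g, eq_comm]
  have hg_surj : Function.Surjective g := by
    refine fun w => h.mem_of_adj_closed (S := Set.range g) ?_ ⟨1, rfl⟩ w
    rintro _ t ⟨a, rfl⟩ hat
    fin_cases a <;> simp_all [g] <;> tauto
  refine ⟨RelIso.symm ⟨Equiv.ofBijective g ⟨hg_inj, hg_surj⟩, fun {a b} => ?_⟩⟩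
  change G.Adj (g a) (g b) ↔ _
  fin_cases a <;> fin_cases b <;>
    simp [g, hx, hu, hv, hy, pathGraph_adj, hxu, huv, huv.symm, hvy.symm, hxv, hxv.symm, hyu,
      hyu.symm, hxy, hxy.symm]

lemma Coloring.isBipartiteWith_compl (c : G.Coloring (Fin 2)) :
    G.IsBipartiteWith {v | c v = 0} {v | c v = 0}ᶜ where
  disjoint := disjoint_compl_right
  mem_of_adj v w h := by
    have := c.valid h
    simp only [Set.mem_ofPred_eq, Set.mem_compl_iff]
    omega

end SimpleGraph

section Connected

variable {V : Type*} [Fintype V] {G : SimpleGraph V} {s v w : V}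

lemma not_isLeaf_of_isLeaf_of_adj (hconn : G.Connected) (hn : 3 ≤ Fintype.card V)
    (hv : IsLeaf G v) (h : G.Adj v w) : ¬ IsLeaf G w := by
  classical
  intro hw
  have hcl : ∀ ⦃a b⦄, a ∈ ({v, w} : Set V) → G.Adj a b → b ∈ ({v, w} : Set V) := by
    rintro a b (rfl | rfl) hab
    · exact Or.inr (hv.eq_of_adj h hab)
    · exact Or.inl (hw.eq_of_adj h.symm hab)
  have huniv : (Finset.univ : Finset V) ⊆ {v, w} := fun x _ => by
    simpa using hconn.preconnected.mem_of_adj_closed hcl (Set.mem_insert v _) x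
  have := (Finset.card_le_card huniv).trans Finset.card_le_two
  rw [Finset.card_univ] at this
  omega

lemma exists_adj_not_isLeaf_of_mem_supports (hconn : G.Connected) (hn : 3 ≤ Fintype.card V)
    (htf : TwinFree G) (hs : s ∈ supports G) : ∃ d, G.Adj s d ∧ ¬ IsLeaf G d := by
  obtain ⟨l, hl, hsl⟩ := hs
  by_contra! h
  have hs_leaf : IsLeaf G s := isLeaf_of_neighborSet_eq (w := l) <|
    Set.eq_singleton_iff_unique_mem.mpr
      ⟨hsl, fun d hd => htf.eq_of_isLeaf_of_adj (h d hd) hl hd hsl⟩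
  exact not_isLeaf_of_isLeaf_of_adj hconn hn hs_leaf hsl hl

end Connected

section Bipartite

variable {V : Type*} {G : SimpleGraph V} {A : Set V} {a b v : V}

lemma closedNbr_inter_of_mem (hA : G.IsBipartiteWith A Aᶜ) (hv : v ∈ A) :
    closedNbr G v ∩ A = {v} := by
  ext x
  simp only [Set.mem_inter_iff, mem_closedNbr, Set.mem_singleton_iff]
  constructor
  · rintro ⟨rfl | hvx, hx⟩
    · rfl
    · exact absurd hx (hA.mem_of_mem_adj hv hvx)
  · rintro rfl
    exact ⟨Or.inl rfl, hv⟩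

lemma closedNbr_inter_of_notMem (hA : G.IsBipartiteWith A Aᶜ) (hv : v ∉ A) :
    closedNbr G v ∩ A = G.neighborSet v := by
  ext x
  simp only [Set.mem_inter_iff, mem_closedNbr, mem_neighborSet]
  constructor
  · rintro ⟨rfl | hvx, hx⟩
    · exact absurd hx hv
    · exact hvx
  · intro hvx
    exact ⟨Or.inr hvx, hA.mem_of_mem_adj' hv hvx.symm⟩

lemma inter_eq_inter_of_inter_eq_of_subset {s t C : Set V} (h : s ∩ C = t ∩ C) (hAC : A ⊆ C) :
    s ∩ A = t ∩ A := by
  rw [← Set.inter_eq_right.mpr hAC, ← Set.inter_assoc, ← Set.inter_assoc, h]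

variable {d : V → V}

lemma closedNbr_inter_union_image_ne (hA : G.IsBipartiteWith A Aᶜ)
    (hd : ∀ s ∈ supports G, G.Adj s (d s) ∧ ¬ IsLeaf G (d s)) (ha : a ∈ A) (hb : b ∉ A) :
    closedNbr G a ∩ (A ∪ d '' (supports G ∩ A)) ≠
      closedNbr G b ∩ (A ∪ d '' (supports G ∩ A)) := by
  intro h
  have hNb : G.neighborSet b = {a} := by
    rw [← closedNbr_inter_of_notMem hA hb, ← closedNbr_inter_of_mem hA ha,
      inter_eq_inter_of_inter_eq_of_subset h Set.subset_union_left]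
  have hb_leaf : IsLeaf G b := isLeaf_of_neighborSet_eq hNb
  have hba : G.Adj b a := by rw [← mem_neighborSet, hNb]; rfl
  have has : a ∈ supports G := ⟨b, hb_leaf, hba.symm⟩
  obtain ⟨had, hdl⟩ := hd a has
  -- `d a` lies in the code and in `N[a]`, hence in `N[b] = {b, a}`, which is impossible.
  have hdb : d a ∈ closedNbr G b ∩ (A ∪ d '' (supports G ∩ A)) := by
    rw [← h]
    exact ⟨mem_closedNbr_of_adj had, Or.inr ⟨a, ⟨has, ha⟩, rfl⟩⟩
  rcases mem_closedNbr.mp hdb.1 with hdb | hbd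
  · exact hdl (hdb ▸ hb_leaf)
  · exact G.ne_of_adj had (hb_leaf.eq_of_adj hba hbd).symm

lemma isIdCode_union_image (hA : G.IsBipartiteWith A Aᶜ) (htf : TwinFree G)
    (hadj : ∀ v, ∃ w, G.Adj v w)
    (hd : ∀ s ∈ supports G, G.Adj s (d s) ∧ ¬ IsLeaf G (d s)) :
    IsIdCode G (A ∪ d '' (supports G ∩ A)) := by
  refine ⟨fun v => ?_, fun u v h => ?_⟩
  · by_cases hv : v ∈ A
    · exact ⟨v, self_mem_closedNbr G v, Or.inl hv⟩
    · obtain ⟨w, hw⟩ := hadj v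
      exact ⟨w, mem_closedNbr_of_adj hw, Or.inl (hA.mem_of_mem_adj' hv hw.symm)⟩
  have hA_eq : closedNbr G u ∩ A = closedNbr G v ∩ A :=
    inter_eq_inter_of_inter_eq_of_subset h Set.subset_union_left
  by_cases hu : u ∈ A <;> by_cases hv : v ∈ A
  · rwa [closedNbr_inter_of_mem hA hu, closedNbr_inter_of_mem hA hv,
      Set.singleton_eq_singleton_iff] at hA_eq
  · exact absurd h (closedNbr_inter_union_image_ne hA hd hu hv)
  · exact absurd h.symm (closedNbr_inter_union_image_ne hA hd hv hu)
  · rw [closedNbr_inter_of_notMem hA hu, closedNbr_inter_of_notMem hA hv] at hA_eq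
    by_contra hne
    exact (htf u v hne).1 hA_eq

lemma exists_isIdCode_ncard_le [Fintype V] (hconn : G.Connected) (hn : 3 ≤ Fintype.card V)
    (htf : TwinFree G) (hA : G.IsBipartiteWith A Aᶜ) :
    ∃ C, IsIdCode G C ∧ C.ncard ≤ A.ncard + (supports G ∩ A).ncard := by
  have : Nontrivial V := Fintype.one_lt_card_iff_nontrivial.mp (by omega)
  choose! d hd using fun s (hs : s ∈ supports G) =>
    exists_adj_not_isLeaf_of_mem_supports hconn hn htf hs
  refine ⟨_, isIdCode_union_image hA htf hconn.preconnected.exists_adj_of_nontrivial hd, ?_⟩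
  exact (Set.ncard_union_le _ _).trans
    (Nat.add_le_add_left (Set.ncard_image_le (Set.toFinite _)) _)

end Bipartite

section NonLeaves

variable {V : Type*} {G : SimpleGraph V} {a b u v w : V}

lemma closedNbr_inter_compl_leaves_of_isLeaf [Fintype V] (hconn : G.Connected)
    (hn : 3 ≤ Fintype.card V) (hv : IsLeaf G v) (h : G.Adj v w) :
    closedNbr G v ∩ (leaves G)ᶜ = {w} := by
  ext x
  simp only [Set.mem_inter_iff, mem_closedNbr, Set.mem_compl_iff, Set.mem_singleton_iff]
  constructor
  · rintro ⟨rfl | hvx, hx⟩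
    · exact absurd hv hx
    · exact hv.eq_of_adj h hvx
  · rintro rfl
    exact ⟨Or.inr h, not_isLeaf_of_isLeaf_of_adj hconn hn hv h⟩

lemma closedNbr_inter_compl_leaves_ne [Fintype V] (hconn : G.Connected)
    (hn : 3 ≤ Fintype.card V) (htf : TwinFree G) (ha : IsLeaf G a) (hb : ¬ IsLeaf G b) :
    closedNbr G a ∩ (leaves G)ᶜ ≠ closedNbr G b ∩ (leaves G)ᶜ := by
  intro h
  obtain ⟨s, has⟩ := ha.exists_adj
  rw [closedNbr_inter_compl_leaves_of_isLeaf hconn hn ha has] at h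
  have hbs : b = s := by
    have hb' : b ∈ closedNbr G b ∩ (leaves G)ᶜ := ⟨self_mem_closedNbr G b, hb⟩
    rwa [← h, Set.mem_singleton_iff] at hb'
  subst hbs
  -- every neighbour of `b` is a leaf, so by twin-freeness `a` is its only neighbour
  refine hb (isLeaf_of_neighborSet_eq (w := a) (Set.eq_singleton_iff_unique_mem.mpr
    ⟨has.symm, fun x hbx => htf.eq_of_isLeaf_of_adj ?_ ha hbx has.symm⟩))
  by_contra hx
  have hx' : x ∈ closedNbr G b ∩ (leaves G)ᶜ := ⟨mem_closedNbr_of_adj hbx, hx⟩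
  rw [← h, Set.mem_singleton_iff] at hx'
  exact G.ne_of_adj hbx hx'.symm

lemma exists_isLeaf_neighborSet_eq_pair (htf : TwinFree G) (hG : G.CliqueFree 3)
    (hu : ¬ IsLeaf G u) (huv : G.Adj u v)
    (h : closedNbr G u ∩ (leaves G)ᶜ = closedNbr G v ∩ (leaves G)ᶜ) :
    ∃ x, IsLeaf G x ∧ G.neighborSet u = {v, x} := by
  classical
  have hleaf : ∀ z, G.Adj u z → z ≠ v → IsLeaf G z := by
    intro z huz hzv
    by_contra hz
    have hz' : z ∈ closedNbr G v ∩ (leaves G)ᶜ := h ▸ ⟨mem_closedNbr_of_adj huz, hz⟩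
    rcases mem_closedNbr.mp hz'.1 with rfl | hvz
    · exact hzv rfl
    · exact hG {u, v, z} (is3Clique_triple_iff.mpr ⟨huv, huz, hvz⟩)
  obtain ⟨x, hux, hxv⟩ : ∃ x, G.Adj u x ∧ x ≠ v := by
    by_contra! hall
    exact hu (isLeaf_of_neighborSet_eq (w := v)
      (Set.eq_singleton_iff_unique_mem.mpr ⟨huv, hall⟩))
  have hx := hleaf x hux hxv
  refine ⟨x, hx, Set.ext fun z => ⟨fun huz => ?_, ?_⟩⟩
  · by_cases hzv : z = v
    · exact Or.inl hzv
    · exact Or.inr (htf.eq_of_isLeaf_of_adj (hleaf z huz hzv) hx huz hux)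
  · rintro (rfl | rfl)
    exacts [huv, hux]

lemma isIdCode_compl_leaves [Fintype V] (hconn : G.Connected) (hn : 3 ≤ Fintype.card V)
    (htf : TwinFree G) (hG : G.CliqueFree 3) (hP4 : IsEmpty (G ≃g pathGraph 4)) :
    IsIdCode G (leaves G)ᶜ := by
  refine ⟨fun v => ?_, fun u v h => ?_⟩
  · by_cases hv : IsLeaf G v
    · obtain ⟨w, hw⟩ := hv.exists_adj
      exact ⟨w, mem_closedNbr_of_adj hw, not_isLeaf_of_isLeaf_of_adj hconn hn hv hw⟩
    · exact ⟨v, self_mem_closedNbr G v, hv⟩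
  by_cases hu : IsLeaf G u <;> by_cases hv : IsLeaf G v
  · obtain ⟨s, hus⟩ := hu.exists_adj
    obtain ⟨t, hvt⟩ := hv.exists_adj
    rw [closedNbr_inter_compl_leaves_of_isLeaf hconn hn hu hus,
      closedNbr_inter_compl_leaves_of_isLeaf hconn hn hv hvt,
      Set.singleton_eq_singleton_iff] at h
    exact htf.eq_of_isLeaf_of_adj hu hv (h ▸ hus.symm) hvt.symm
  · exact absurd h (closedNbr_inter_compl_leaves_ne hconn hn htf hu hv)
  · exact absurd h.symm (closedNbr_inter_compl_leaves_ne hconn hn htf hv hu)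
  by_contra hne
  have huv : G.Adj u v := by
    have hu' : u ∈ closedNbr G v ∩ (leaves G)ᶜ := h ▸ ⟨self_mem_closedNbr G u, hu⟩
    exact (mem_closedNbr.mp hu'.1).resolve_left hne |>.symm
  obtain ⟨x, hx, hNu⟩ := exists_isLeaf_neighborSet_eq_pair htf hG hu huv h
  obtain ⟨y, hy, hNv⟩ := exists_isLeaf_neighborSet_eq_pair htf hG hv huv.symm h.symm
  have hux : G.Adj u x := by rw [← mem_neighborSet, hNu]; exact Or.inr rfl
  have hvy : G.Adj v y := by rw [← mem_neighborSet, hNv]; exact Or.inr rfl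
  rw [Set.pair_comm] at hNu
  exact hP4.false (hconn.preconnected.nonempty_iso_pathGraph_four (hx.neighborSet_eq hux.symm)
    hNu hNv (hy.neighborSet_eq hvy.symm) fun hxv => hv (hxv ▸ hx)).some

end NonLeaves

theorem stmt_6 {V : Type*} [Fintype V] (G : SimpleGraph V)
    (hconn : G.Connected) (hbip : G.Colorable 2) (htf : TwinFree G)
    (hn : 3 ≤ Fintype.card V) (hP4 : IsEmpty (G ≃g pathGraph 4)) :
    ∃ C : Set V, IsIdCode G C ∧
      (C.ncard : ℝ) ≤ 2 * (Fintype.card V : ℝ) / 3 := by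
  obtain ⟨c⟩ := hbip
  set A := {v | c v = 0}
  have hA : G.IsBipartiteWith A Aᶜ := c.isBipartiteWith_compl
  obtain ⟨C₁, hC₁, hC₁n⟩ := exists_isIdCode_ncard_le hconn hn htf hA
  have hA' : G.IsBipartiteWith Aᶜ Aᶜᶜ := by rw [compl_compl]; exact hA.symm
  obtain ⟨C₂, hC₂, hC₂n⟩ := exists_isIdCode_ncard_le hconn hn htf hA'
  have hC₃ := isIdCode_compl_leaves hconn hn htf (hA.isBipartite.cliqueFree (by norm_num)) hP4
  have hsum : C₁.ncard + C₂.ncard + (leaves G)ᶜ.ncard ≤ 2 * Fintype.card V := by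
    have hAc := Set.ncard_add_ncard_compl A
    have hLc := Set.ncard_add_ncard_compl (leaves G)
    have hS := Set.ncard_inter_add_ncard_sdiff_eq_ncard (supports G) A (Set.toFinite _)
    have hSL := ncard_supports_le_ncard_leaves (G := G)
    rw [Set.sdiff_eq] at hS
    rw [Nat.card_eq_fintype_card] at hAc hLc
    omega
  by_contra! hbig
  have hsum' : (C₁.ncard + C₂.ncard + (leaves G)ᶜ.ncard : ℝ) ≤ 2 * Fintype.card V := by
    exact_mod_cast hsum
  linarith [hbig C₁ hC₁, hbig C₂ hC₂, hbig _ hC₃]
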